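/- arXiv:1011.4141 — 2 statements merged into one kernel-verified Lean document; each statement's English description precedes it below -/
import Mathlib

section
/- Let (R, m) be a Noetherian local ring, a an ideal, M a finitely generated R-module, and t > 0. If F^i_a(M) is Artinian for all i < t, then a is contained in the radical of Ann_R(F^i_a(M)) for all i < t; i.e. some power of a annihilates F^i_a(M). -/
open CategoryTheory CategoryTheory.Limits IsLocalRing DirectSum

noncomputable section

/-- The inverse system `n ↦ M ⧸ aⁿM` with the natural projection maps. -/
def formalQuotDiagram (R : Type) [CommRing R] (a : Ideal R)
    (M : Type) [AddCommGroup M] [Module R M] : ℕᵒᵖ ⥤ ModuleCat R :=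
  CategoryTheory.Functor.ofOpSequence
    (X := fun n => ModuleCat.of R (M ⧸ (a ^ n • ⊤ : Submodule R M)))
    (fun n => ModuleCat.ofHom (Submodule.mapQ _ _ LinearMap.id (by
      simpa using Submodule.smul_mono (Ideal.pow_le_pow_right n.le_succ) le_rfl)))

/-- Formal local cohomology `𝔉ⁱ_a(M) = lim_n Hⁱ_m(M ⧸ aⁿM)`. -/
def formalLocalCohomology (R : Type) [CommRing R] [IsLocalRing R] (a : Ideal R) (i : ℕ)
    (M : Type) [AddCommGroup M] [Module R M] : ModuleCat R :=
  limit (formalQuotDiagram R a M ⋙ localCohomology (maximalIdeal R) i)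

/-- Attached primes of a module: primes of the form `Ann(M/N)`. -/
def attachedPrimes (R : Type) [CommRing R] (M : Type) [AddCommGroup M] [Module R M] :
    Set (Ideal R) :=
  {p | p.IsPrime ∧ ∃ N : Submodule R M, p = Module.annihilator R (M ⧸ N)}

/-- `E` is an injective hull (injective essential extension) of `N`. -/
def IsInjectiveHull (R : Type) [CommRing R] (N : Type) [AddCommGroup N] [Module R N]
    (E : Type) [AddCommGroup E] [Module R E] : Prop :=
  Module.Injective R E ∧ ∃ f : N →ₗ[R] E, Function.Injective f ∧
    ∀ S : Submodule R E, S ≠ ⊥ → S ⊓ LinearMap.range f ≠ ⊥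

/-- The module `⊕_{m maximal} R/m`, whose injective hull is the minimal injective
cogenerator `E_R`. -/
def cogenerator (R : Type) [CommRing R] : Type :=
  ⨁ m : MaximalSpectrum R, R ⧸ m.asIdeal

instance (R : Type) [CommRing R] : AddCommGroup (cogenerator R) := by
  unfold cogenerator; infer_instance

instance (R : Type) [CommRing R] : Module R (cogenerator R) := by
  unfold cogenerator; infer_instance

/-- Richardson's cosupport, via colocalization: `p ∈ CoSupp M` iff
`ᵖM = D_{R_p}((D_R M)_p) ≠ 0`, where `D` denotes duals into minimal injective
cogenerators (injective hulls of the direct sum of the residue fields). -/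
def CoSupport (R : Type) [CommRing R] (M : Type) [AddCommGroup M] [Module R M] :
    Set (PrimeSpectrum R) :=
  {p | ∀ (E : Type) [AddCommGroup E] [Module R E], IsInjectiveHull R (cogenerator R) E →
       ∀ (Ep : Type) [AddCommGroup Ep] [Module (Localization.AtPrime p.asIdeal) Ep],
         IsInjectiveHull (Localization.AtPrime p.asIdeal)
           (cogenerator (Localization.AtPrime p.asIdeal)) Ep →
       Nontrivial ((LocalizedModule p.asIdeal.primeCompl (M →ₗ[R] E))
          →ₗ[Localization.AtPrime p.asIdeal] Ep)}

/-- Coassociated primes over a local ring: `Coass M = Ass Hom_R(M, E(R/m))`. -/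
def Coassociated (R : Type) [CommRing R] [IsLocalRing R]
    (M : Type) [AddCommGroup M] [Module R M] : Set (PrimeSpectrum R) :=
  {p | ∀ (E : Type) [AddCommGroup E] [Module R E],
        IsInjectiveHull R (R ⧸ maximalIdeal R) E →
        p.asIdeal ∈ associatedPrimes R (M →ₗ[R] E)}

/-- The height of an ideal. -/
def idealHeight (R : Type) [CommRing R] (a : Ideal R) : ℕ∞ :=
  sInf {n | ∃ p : PrimeSpectrum R, a ≤ p.asIdeal ∧ Order.height p = n}

/-- The `a`-torsion submodule `H⁰_a(M) = ∪ₙ (0 :_M aⁿ)`. -/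
def idealTorsion (R : Type) [CommRing R] (a : Ideal R)
    (M : Type) [AddCommGroup M] [Module R M] : Submodule R M :=
  ⨆ n : ℕ, Submodule.torsionBySet R M ((a ^ n : Ideal R) : Set R)

/-- A Noetherian local ring is Gorenstein iff it has finite injective dimension
over itself, i.e. `Extⁱ(N, R) = 0` for all `i` larger than some bound and all `N`. -/
def IsGorensteinLocalRing (R : Type) [CommRing R] : Prop :=
  IsNoetherianRing R ∧ IsLocalRing R ∧
    ∃ n : ℕ, ∀ i : ℕ, n < i → ∀ N : ModuleCat R,
      Subsingleton (((Ext R (ModuleCat R) i).obj (Opposite.op N)).obj (ModuleCat.of R R))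

end

/-!
Each `Hⁱ_m(M ⧸ aⁿM)` is killed by `aⁿ`: an ideal annihilating `N` annihilates `Hom(P, N)`,
hence the homology of `Hom(P•, N)` for a projective resolution `P•`, i.e. `Extⁱ(R ⧸ mᵏ, N)`,
and hence the colimit `Hⁱ_m(N)` of these. Therefore `aⁿ 𝔉ⁱ_a(M)` maps to zero in
`Hⁱ_m(M ⧸ aⁿM)`, so `⋂ₙ aⁿ 𝔉ⁱ_a(M) = 0`. When `𝔉ⁱ_a(M)` is Artinian the chain `aⁿ 𝔉ⁱ_a(M)`
stabilizes, and its stable value is that intersection, so `aⁿ 𝔉ⁱ_a(M) = 0` for large `n`.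
-/

open Module Opposite

universe u v w

namespace ModuleCat

variable {R : Type u} [CommRing R]

theorem mem_annihilator_iff_smul_id {X : ModuleCat.{v} R} {r : R} :
    r ∈ annihilator R X ↔ r • 𝟙 X = 0 :=
  mem_annihilator.trans
    ⟨fun h ↦ hom_ext <| LinearMap.ext h, fun h x ↦ by simpa using congr($h x)⟩

theorem annihilator_le_annihilator_hom (A N : ModuleCat.{v} R) :
    annihilator R N ≤ annihilator R (A ⟶ N) := fun _ hr ↦
  mem_annihilator.mpr fun f ↦ hom_ext <| LinearMap.ext fun x ↦ mem_annihilator.mp hr (f x)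

theorem annihilator_le_annihilator_homology (S : ShortComplex (ModuleCat.{v} R)) :
    annihilator R S.X₂ ≤ annihilator R S.homology :=
  (LinearMap.annihilator_le_of_injective _ ((mono_iff_injective S.iCycles).mp inferInstance)).trans
    (LinearMap.annihilator_le_of_surjective _ ((epi_iff_surjective S.homologyπ).mp inferInstance))

theorem le_annihilator_colimit {J : Type w} [Category J] (F : J ⥤ ModuleCat.{v} R)
    [HasColimit F] {I : Ideal R} (hF : ∀ j, I ≤ annihilator R (F.obj j)) :
    I ≤ annihilator R (colimit F : ModuleCat.{v} R) := by
  intro r hr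
  rw [mem_annihilator_iff_smul_id]
  refine colimit.hom_ext fun j ↦ ?_
  rw [Linear.comp_smul, Category.comp_id, comp_zero, ← Category.id_comp (colimit.ι F j),
    ← Linear.smul_comp, mem_annihilator_iff_smul_id.mp (hF j hr), zero_comp]

theorem iInf_smul_top_limit_eq_bot {J : Type v} [SmallCategory J] {F : J ⥤ ModuleCat.{v} R}
    (I : J → Ideal R) (hF : ∀ j, I j ≤ annihilator R (F.obj j)) :
    ⨅ j, I j • (⊤ : Submodule R (limit F : ModuleCat.{v} R)) = ⊥ := by
  refine eq_bot_iff.mpr fun x hx ↦ Concrete.limit_ext F x 0 fun j ↦ ?_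
  have hj : I j • (⊤ : Submodule R (F.obj j)) = ⊥ := by
    rw [← Submodule.le_annihilator_iff, Submodule.annihilator_top]; exact hF j
  have hxj : (limit.π F j).hom x ∈ I j • (⊤ : Submodule R (F.obj j)) := by
    have := Submodule.mem_map_of_mem (f := (limit.π F j).hom) ((Submodule.mem_iInf _).mp hx j)
    rw [Submodule.map_smul''] at this
    exact Submodule.smul_mono le_rfl le_top this
  rw [hj] at hxj
  simpa using hxj

end ModuleCat

variable {R : Type u} [CommRing R]

theorem Submodule.le_annihilator_quotient_smul_top {M : Type*} [AddCommGroup M] [Module R M]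
    (I : Ideal R) : I ≤ Module.annihilator R (M ⧸ I • (⊤ : Submodule R M)) := fun _ hr ↦
  Module.mem_annihilator.mpr fun _ ↦ isTorsionBySet_quotient_ideal_smul M I (a := ⟨_, hr⟩)

theorem IsArtinian.exists_pow_le_annihilator_of_iInf_pow_smul_eq_bot {M : Type*}
    [AddCommGroup M] [Module R M] [IsArtinian R M] {a : Ideal R}
    (h : ⨅ n : ℕ, a ^ n • (⊤ : Submodule R M) = ⊥) :
    ∃ n, a ^ n ≤ annihilator R M := by
  obtain ⟨n, hn⟩ := IsArtinian.monotone_stabilizes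
    ⟨fun k ↦ OrderDual.toDual (a ^ k • ⊤ : Submodule R M),
      fun _ _ hkl ↦ Submodule.smul_mono (Ideal.pow_le_pow_right hkl) le_rfl⟩
  have hbot : a ^ n • (⊤ : Submodule R M) ≤ ⊥ := h ▸ le_iInf fun m ↦ (le_total n m).elim
    (fun hnm ↦ (congrArg OrderDual.ofDual (hn m hnm)).le)
    (fun hmn ↦ Submodule.smul_mono (Ideal.pow_le_pow_right hmn) le_rfl)
  refine ⟨n, ?_⟩
  rw [← Submodule.annihilator_top, Submodule.le_annihilator_iff]
  exact le_bot_iff.mp hbot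

theorem annihilator_le_annihilator_ext (i : ℕ) (X N : ModuleCat.{u} R) :
    annihilator R N ≤ annihilator R (((Ext R (ModuleCat.{u} R) i).obj (op X)).obj N) := by
  let P := ProjectiveResolution.of X
  rw [(P.isoExt i N).toLinearEquiv.annihilator_eq]
  exact (ModuleCat.annihilator_le_annihilator_hom (P.complex.X i) N).trans
    (ModuleCat.annihilator_le_annihilator_homology ((P.complex.linearYonedaObj R N).sc i))

theorem annihilator_le_annihilator_localCohomology (J : Ideal R) (i : ℕ) (N : ModuleCat.{u} R) :
    annihilator R N ≤ annihilator R ((localCohomology J i).obj N) := by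
  have := localCohomology.hasColimitDiagram (localCohomology.idealPowersDiagram J) i
  exact (ModuleCat.le_annihilator_colimit _ fun _ ↦ annihilator_le_annihilator_ext i _ N).trans_eq
    (colimitObjIsoColimitCompEvaluation _ N).toLinearEquiv.annihilator_eq.symm

theorem pow_le_annihilator_localCohomology_formalQuotDiagram {R : Type} [CommRing R]
    [IsLocalRing R] (a : Ideal R) (M : Type) [AddCommGroup M] [Module R M] (i n : ℕ) :
    a ^ n ≤ annihilator R
      ((formalQuotDiagram R a M ⋙ localCohomology (maximalIdeal R) i).obj (op n)) :=
  (Submodule.le_annihilator_quotient_smul_top (a ^ n)).trans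
    (annihilator_le_annihilator_localCohomology _ i (ModuleCat.of R (M ⧸ a ^ n • ⊤)))

theorem stmt4_general (R : Type) [CommRing R] [IsLocalRing R]
    (a : Ideal R) (M : Type) [AddCommGroup M] [Module R M]
    (t : ℕ)
    (h : ∀ i < t, IsArtinian R (formalLocalCohomology R a i M)) :
    ∀ i < t, a ≤ (Module.annihilator R (formalLocalCohomology R a i M)).radical := by
  intro i hi
  have := h i hi
  have hsep : ⨅ n : ℕ, a ^ n • (⊤ : Submodule R (formalLocalCohomology R a i M)) = ⊥ := by
    have := ModuleCat.iInf_smul_top_limit_eq_bot (fun k : ℕᵒᵖ ↦ a ^ k.unop) fun k ↦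
      pow_le_annihilator_localCohomology_formalQuotDiagram a M i k.unop
    rwa [← equivToOpposite.iInf_comp] at this
  obtain ⟨n, hn⟩ := IsArtinian.exists_pow_le_annihilator_of_iInf_pow_smul_eq_bot hsep
  exact fun r hr ↦ ⟨n, hn (Ideal.pow_mem_pow hr n)⟩

/-- if `𝔉ⁱ_a(M)` is Artinian for all `i < t`, then
`a ⊆ Rad(Ann 𝔉ⁱ_a(M))` for all `i < t`. -/
theorem stmt4 (R : Type) [CommRing R] [IsNoetherianRing R] [IsLocalRing R]
    (a : Ideal R) (M : Type) [AddCommGroup M] [Module R M] [Module.Finite R M]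
    (t : ℕ) (ht : 0 < t)
    (h : ∀ i < t, IsArtinian R (formalLocalCohomology R a i M)) :
    ∀ i < t, a ≤ (Module.annihilator R (formalLocalCohomology R a i M)).radical :=
  stmt4_general R a M t h
end

section
/- Let R be a Noetherian ring and M an R-module. Define the colocalization of M at a prime p as ^pM = D_{R_p}((D_R(M))_p), where D_R(-) = Hom_R(-, E_R) with E_R the injective hull of the direct sum of R/m over all maximal ideals m, and define CoSupp M = { p : ^pM ≠ 0 }. Then CoSupp M is stable under specialization: if p ∈ CoSupp M and p ⊆ q for primes p, q, then q ∈ CoSupp M. -/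
open CategoryTheory CategoryTheory.Limits IsLocalRing DirectSum

/-!
Since `E_S` contains a copy of every residue field `S ⧸ m`, it is a cogenerator: for `x ≠ 0`
choose a maximal `m ⊇ ann x`; injectivity extends `S ⧸ ann x ≅ S x → S ⧸ m ↪ E_S` to a map
`X → E_S` not killing `x`. Hence `Hom_{R_p}(N, E_{R_p}) ≠ 0` iff `N ≠ 0`, so `p ∈ CoSupp M` iff
`D_R(M)_p ≠ 0`: the cosupport is the support of `D_R(M)`, which is stable under specialization.
As the cosupport quantifies over all injective hulls, this also needs their existence: a maximal
essential extension of `N` inside an injective module is injective.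
-/

universe u

theorem Module.Injective.of_comp_eq_id {S : Type*} [Ring S] {E J : Type u} [AddCommGroup E]
    [Module S E] [AddCommGroup J] [Module S J] [Module.Injective S J]
    (i : E →ₗ[S] J) (r : J →ₗ[S] E) (hri : r ∘ₗ i = LinearMap.id) : Module.Injective S E where
  out X Y _ _ _ _ f hf g := by
    obtain ⟨h, hh⟩ := Module.Injective.out f hf (i ∘ₗ g)
    refine ⟨r ∘ₗ h, fun x => ?_⟩
    rw [LinearMap.comp_apply, hh]
    exact LinearMap.congr_fun hri (g x)

theorem exists_maximal_disjoint {α : Type*} [CompleteLattice α] [IsCompactlyGenerated α] (a : α) :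
    ∃ c, Maximal (Disjoint · a) c := by
  obtain ⟨c, -, hc⟩ := zorn_le_nonempty₀ {c | Disjoint c a}
    (fun c hc hchain _ hy => ⟨sSup c, (hchain.directedOn.disjoint_sSup_left).mpr hc,
      fun _ hz => le_sSup hz⟩) ⊥ disjoint_bot_left
  exact ⟨c, hc⟩

namespace Submodule

variable {S : Type*} [Ring S] {J : Type*} [AddCommGroup J] [Module S J]

def IsEssentialExtension (N P : Submodule S J) : Prop :=
  N ≤ P ∧ ∀ x ∈ P, x ≠ 0 → ∃ s : S, s • x ∈ N ∧ s • x ≠ 0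

theorem exists_maximal_isEssentialExtension (N : Submodule S J) :
    ∃ E, Maximal N.IsEssentialExtension E := by
  obtain ⟨E, -, hE⟩ := zorn_le_nonempty₀ {P | N.IsEssentialExtension P}
    (fun c hc hchain y hy => ⟨sSup c, ⟨(hc hy).1.trans (le_sSup hy), fun x hx hx0 => by
      obtain ⟨P, hP, hxP⟩ := (mem_sSup_of_directed ⟨y, hy⟩ hchain.directedOn).mp hx
      exact (hc hP).2 x hxP hx0⟩, fun _ hz => le_sSup hz⟩)
    N ⟨le_rfl, fun x hx hx0 => ⟨1, by simpa using hx, by simpa using hx0⟩⟩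
  exact ⟨E, hE⟩

theorem isEssentialExtension_map_mkQ_top {E C : Submodule S J} (hC : Maximal (Disjoint · E) C) :
    (E.map C.mkQ).IsEssentialExtension ⊤ := by
  refine ⟨le_top, fun y _ hy => ?_⟩
  obtain ⟨j, rfl⟩ := C.mkQ_surjective y
  have hjC : j ∉ C := fun h => hy ((Quotient.mk_eq_zero C).mpr h)
  have hmeet : ¬Disjoint (C ⊔ S ∙ j) E := fun h =>
    hjC (hC.eq_of_le h le_sup_left ▸ mem_sup_right (mem_span_singleton_self j))
  obtain ⟨x, hx, hx0⟩ := (Submodule.ne_bot_iff _).mp (disjoint_iff.not.mp hmeet)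
  obtain ⟨hxCj, hxE⟩ := mem_inf.mp hx
  obtain ⟨c, hc, _, hz, rfl⟩ := mem_sup.mp hxCj
  obtain ⟨s, rfl⟩ := mem_span_singleton.mp hz
  have hc0 : C.mkQ c = 0 := (Quotient.mk_eq_zero C).mpr hc
  have hmk : s • C.mkQ j = C.mkQ (c + s • j) := by rw [map_add, map_smul, hc0, zero_add]
  refine ⟨s, hmk ▸ mem_map_of_mem hxE, hmk ▸ fun h => hx0 ?_⟩
  exact (disjoint_def.mp hC.prop) _ ((Quotient.mk_eq_zero C).mp h) hxE

theorem injective_of_maximal_isEssentialExtension [Module.Injective S J] {N E : Submodule S J}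
    (hE : Maximal N.IsEssentialExtension E) : Module.Injective S E := by
  -- Modulo a maximal complement `C` of `E`, the inclusion of `E` extends to `g : J ⧸ C → J`.
  -- Its range is again an essential extension of `N`, so it is `E`, and `g ∘ mkQ` retracts
  -- `J` onto `E`.
  obtain ⟨C, hC⟩ := exists_maximal_disjoint E
  let φ : E →ₗ[S] J ⧸ C := C.mkQ ∘ₗ E.subtype
  have hφ : Function.Injective φ := by
    refine (injective_iff_map_eq_zero φ).mpr fun x hx => Subtype.ext ?_
    exact (disjoint_def.mp hC.prop) _ ((Quotient.mk_eq_zero C).mp hx) x.2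
  obtain ⟨g, hg⟩ := Module.Injective.out φ hφ E.subtype
  have hrange : N.IsEssentialExtension (LinearMap.range g) := by
    refine ⟨hE.prop.1.trans fun e he => ⟨φ ⟨e, he⟩, hg ⟨e, he⟩⟩, ?_⟩
    rintro _ ⟨y, rfl⟩ hgy
    have hy : y ≠ 0 := fun h => hgy (by rw [h, map_zero])
    obtain ⟨s, ⟨e, he, hse⟩, hsy⟩ := (isEssentialExtension_map_mkQ_top hC).2 y trivial hy
    have hsg : s • g y = e := by rw [← map_smul, ← hse]; exact hg ⟨e, he⟩
    have he0 : e ≠ 0 := fun h => hsy (by rw [← hse, h, map_zero])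
    obtain ⟨t, htN, ht0⟩ := hE.prop.2 e he he0
    exact ⟨t * s, by rwa [mul_smul, hsg], by rwa [mul_smul, hsg]⟩
  have hgE : LinearMap.range g = E :=
    (hE.eq_of_le hrange fun e he => ⟨φ ⟨e, he⟩, hg ⟨e, he⟩⟩).symm
  let r : J →ₗ[S] E := (g ∘ₗ C.mkQ).codRestrict E fun j => hgE ▸ ⟨C.mkQ j, rfl⟩
  exact Module.Injective.of_comp_eq_id E.subtype r (LinearMap.ext fun e => Subtype.ext (hg e))

end Submodule

theorem isInjectiveHull_of_isEssentialExtension {S N J : Type} [CommRing S] [AddCommGroup N]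
    [Module S N] [AddCommGroup J] [Module S J] {ι : N →ₗ[S] J} (hι : Function.Injective ι)
    {E : Submodule S J} (hE : (LinearMap.range ι).IsEssentialExtension E)
    [Module.Injective S E] : IsInjectiveHull S N E := by
  refine ⟨inferInstance, ι.codRestrict E fun n => hE.1 ⟨n, rfl⟩,
    fun a b hab => hι (congrArg Subtype.val hab), fun T hT => ?_⟩
  obtain ⟨x, hxT, hx0⟩ := (Submodule.ne_bot_iff T).mp hT
  obtain ⟨s, ⟨n, hn⟩, hs0⟩ := hE.2 x x.2 fun h => hx0 (Subtype.ext h)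
  refine (Submodule.ne_bot_iff _).mpr ⟨s • x, Submodule.mem_inf.mpr ⟨T.smul_mem s hxT,
    ⟨n, Subtype.ext hn⟩⟩, fun h => hs0 (congrArg Subtype.val h)⟩

theorem exists_isInjectiveHull (S N : Type) [CommRing S] [AddCommGroup N] [Module S N] :
    ∃ (E : Type) (_ : AddCommGroup E) (_ : Module S E), IsInjectiveHull S N E := by
  let J := Injective.under (ModuleCat.of S N)
  have : CategoryTheory.Injective (ModuleCat.of S J) := Injective.injective_under _
  have : Module.Injective S J := Module.injective_module_of_injective_object S J
  let ι : N →ₗ[S] J := (Injective.ι (ModuleCat.of S N)).hom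
  have hι : Function.Injective ι := (ModuleCat.mono_iff_injective _).mp inferInstance
  obtain ⟨E, hE⟩ := (LinearMap.range ι).exists_maximal_isEssentialExtension
  have := Submodule.injective_of_maximal_isEssentialExtension hE
  exact ⟨E, _, _, isInjectiveHull_of_isEssentialExtension hι hE.prop⟩

theorem Module.Injective.exists_linearMap_apply_eq {S E : Type u} [Ring S] [AddCommGroup E]
    [Module S E] [Module.Injective S E] {X : Type*} [AddCommGroup X] [Module S X] {x : X} {e : E}
    (h : Ideal.torsionOf S X x ≤ Ideal.torsionOf S E e) : ∃ f : X →ₗ[S] E, f x = e := by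
  let I := Ideal.torsionOf S X x
  let ψ : (S ⧸ I) →ₗ[S] X := I.liftQ (LinearMap.toSpanSingleton S X x) fun a ha => ha
  have hψ : Function.Injective ψ :=
    LinearMap.ker_eq_bot.mp (Submodule.ker_liftQ_eq_bot _ _ _ fun a ha => ha)
  obtain ⟨f, hf⟩ := Module.Injective.extension_property S E _ _ ψ hψ
    (I.liftQ (LinearMap.toSpanSingleton S E e) h)
  have hψ1 : ψ (Submodule.Quotient.mk 1) = x := one_smul S x
  refine ⟨f, ?_⟩
  have := LinearMap.congr_fun hf (Submodule.Quotient.mk 1)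
  rw [LinearMap.comp_apply, hψ1] at this
  exact this.trans (one_smul S e)

theorem exists_ne_zero_le_torsionOf_cogenerator {S : Type} [CommRing S] (m : MaximalSpectrum S) :
    ∃ c : cogenerator S, c ≠ 0 ∧ m.asIdeal ≤ Ideal.torsionOf S _ c := by
  classical
  let lofm := DirectSum.lof S _ (fun n : MaximalSpectrum S => S ⧸ n.asIdeal) m
  refine ⟨lofm (m.asIdeal.mkQ 1), fun h => ?_, fun a ha => ?_⟩
  · have h' : lofm (m.asIdeal.mkQ 1) = lofm 0 := h.trans (map_zero lofm).symm
    rw [DirectSum.lof_eq_of, DirectSum.lof_eq_of] at h'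
    exact (Ideal.ne_top_iff_one _).mp m.isMaximal.ne_top
      ((Submodule.Quotient.mk_eq_zero _).mp (DirectSum.of_injective m h'))
  · show a • lofm (m.asIdeal.mkQ 1) = 0
    rw [← map_smul, ← map_smul, smul_eq_mul, mul_one, Submodule.mkQ_apply,
      (Submodule.Quotient.mk_eq_zero _).mpr ha, map_zero]

theorem exists_linearMap_ne_zero_of_isInjectiveHull {S E : Type} [CommRing S] [AddCommGroup E]
    [Module S E] (hE : IsInjectiveHull S (cogenerator S) E) {X : Type*} [AddCommGroup X]
    [Module S X] {x : X} (hx : x ≠ 0) : ∃ f : X →ₗ[S] E, f x ≠ 0 := by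
  obtain ⟨hEinj, ι, hι, -⟩ := hE
  obtain ⟨m, hm, hxm⟩ := Ideal.exists_le_maximal _ ((Ideal.torsionOf_eq_top_iff S x).not.mpr hx)
  obtain ⟨c, hc0, hmc⟩ := exists_ne_zero_le_torsionOf_cogenerator ⟨m, hm⟩
  have hcι : Ideal.torsionOf S _ c ≤ Ideal.torsionOf S E (ι c) := fun a ha => by
    rw [Ideal.mem_torsionOf_iff] at ha ⊢
    rw [← map_smul, ha, map_zero]
  obtain ⟨f, hf⟩ := hEinj.exists_linearMap_apply_eq (hxm.trans (hmc.trans hcι))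
  exact ⟨f, hf ▸ fun h => hc0 (hι (h.trans (map_zero ι).symm))⟩

theorem nontrivial_linearMap_iff_of_isInjectiveHull {S E : Type} [CommRing S] [AddCommGroup E]
    [Module S E] (hE : IsInjectiveHull S (cogenerator S) E) {X : Type*} [AddCommGroup X]
    [Module S X] : Nontrivial (X →ₗ[S] E) ↔ Nontrivial X := by
  refine ⟨fun _ => not_subsingleton_iff_nontrivial.mp fun _ => not_nontrivial (X →ₗ[S] E) ‹_›,
    fun _ => ?_⟩
  obtain ⟨x, hx⟩ := exists_ne (0 : X)
  obtain ⟨f, hf⟩ := exists_linearMap_ne_zero_of_isInjectiveHull hE hx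
  exact nontrivial_of_ne f 0 fun h => hf (by rw [h, LinearMap.zero_apply])

theorem mem_coSupport_iff {R : Type} [CommRing R] {M : Type} [AddCommGroup M] [Module R M]
    {p : PrimeSpectrum R} : p ∈ CoSupport R M ↔ ∀ (E : Type) [AddCommGroup E] [Module R E],
      IsInjectiveHull R (cogenerator R) E → p ∈ Module.support R (M →ₗ[R] E) := by
  refine ⟨fun hp E _ _ hE => ?_, fun h E _ _ hE Ep _ _ hEp => ?_⟩
  · obtain ⟨Ep, _, _, hEp⟩ := exists_isInjectiveHull (Localization.AtPrime p.asIdeal)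
      (cogenerator (Localization.AtPrime p.asIdeal))
    exact (nontrivial_linearMap_iff_of_isInjectiveHull hEp).mp (hp E hE Ep hEp)
  · exact (nontrivial_linearMap_iff_of_isInjectiveHull hEp).mpr (h E hE)

theorem stmt6_general (R : Type) [CommRing R]
    (M : Type) [AddCommGroup M] [Module R M]
    (p q : PrimeSpectrum R) (hp : p ∈ CoSupport R M) (hpq : p.asIdeal ≤ q.asIdeal) :
    q ∈ CoSupport R M := by
  rw [mem_coSupport_iff] at hp ⊢
  exact fun E _ _ hE => Module.mem_support_mono hpq (hp E hE)

/-- the cosupport (defined via Richardson colocalization) is stable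
under specialization. -/
theorem stmt6 (R : Type) [CommRing R] [IsNoetherianRing R]
    (M : Type) [AddCommGroup M] [Module R M]
    (p q : PrimeSpectrum R) (hp : p ∈ CoSupport R M) (hpq : p.asIdeal ≤ q.asIdeal) :
    q ∈ CoSupport R M :=
  stmt6_general R M p q hp hpq
end
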